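/- arXiv:2511.05942 — 2 statements merged into one kernel-verified Lean document; each statement's English description precedes it below -/
import Mathlib

section
/- The function H(z) = z + \left(1 - z\frac{\cosh z}{\sinh z}\right)\frac{\cosh z}{\sinh z} is strictly positive for all z > 0. -/
open Real

theorem self_lt_sinh_mul_cosh {z : ℝ} (hz : 0 < z) : z < sinh z * cosh z := by
  have h : 2 * z < sinh (2 * z) := self_lt_sinh_iff.mpr (by linarith)
  rw [sinh_two_mul] at h
  linarith

theorem add_one_sub_mul_coth_mul_coth {z : ℝ} (hz : sinh z ≠ 0) :
    z + (1 - z * (cosh z / sinh z)) * (cosh z / sinh z) = (sinh z * cosh z - z) / sinh z ^ 2 := by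
  field_simp
  linear_combination (-z) * cosh_sq_sub_sinh_sq z

/-- `H(z) = z + (1 - z coth z) coth z > 0` for all `z > 0`. -/
theorem H_pos (z : ℝ) (hz : 0 < z) :
    0 < z + (1 - z * (Real.cosh z / Real.sinh z)) * (Real.cosh z / Real.sinh z) := by
  have hsinh : 0 < sinh z := sinh_pos_iff.mpr hz
  rw [add_one_sub_mul_coth_mul_coth hsinh.ne']
  exact div_pos (sub_pos.mpr (self_lt_sinh_mul_cosh hz)) (by positivity)
end

section
/- For z > 0, the derivative of H(z) = z + (1 - z\coth z)\coth z equals \frac{2}{\sinh^3 z}(z\cosh z - \sinh z), and this is strictly positive; consequently H is strictly increasing on (0, \infty). -/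
/-!
Since `coth' = -1 / sinh²` and `coth² - 1 = 1 / sinh²`, the product rule collapses `H'` to
`2 (z cosh z - sinh z) / sinh³ z`. The numerator vanishes at `0` and has derivative `z sinh z > 0`
for `z > 0`, so it is positive there, and `H` increases by the mean value theorem.
-/

open Real Set

lemma hasDerivAt_mul_cosh_sub_sinh (x : ℝ) :
    HasDerivAt (fun x => x * cosh x - sinh x) (x * sinh x) x :=
  (((hasDerivAt_id x).mul (hasDerivAt_cosh x)).sub (hasDerivAt_sinh x)).congr_deriv (by simp)

lemma sinh_lt_mul_cosh {x : ℝ} (hx : 0 < x) : sinh x < x * cosh x := by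
  have hmono : StrictMonoOn (fun x => x * cosh x - sinh x) (Ici 0) :=
    strictMonoOn_of_hasDerivWithinAt_pos (convex_Ici 0)
      (fun y _ => (hasDerivAt_mul_cosh_sub_sinh y).continuousAt.continuousWithinAt)
      (fun y _ => (hasDerivAt_mul_cosh_sub_sinh y).hasDerivWithinAt)
      (fun y hy => by
        rw [interior_Ici] at hy
        exact mul_pos hy (sinh_pos_iff.2 hy))
  simpa using hmono self_mem_Ici hx.le hx

lemma hasDerivAt_cosh_div_sinh {x : ℝ} (hx : x ≠ 0) :
    HasDerivAt (fun x => cosh x / sinh x) (-1 / sinh x ^ 2) x := by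
  refine ((hasDerivAt_cosh x).div (hasDerivAt_sinh x) (sinh_ne_zero.2 hx)).congr_deriv ?_
  rw [← cosh_sq_sub_sinh_sq x]
  ring

lemma hasDerivAt_add_one_sub_mul_coth_mul_coth {z : ℝ} (hz : z ≠ 0) :
    HasDerivAt (fun z => z + (1 - z * (cosh z / sinh z)) * (cosh z / sinh z))
      (2 / sinh z ^ 3 * (z * cosh z - sinh z)) z := by
  have hcoth := hasDerivAt_cosh_div_sinh hz
  refine ((hasDerivAt_id z).add
    (((hasDerivAt_const z 1).sub ((hasDerivAt_id z).mul hcoth)).mul hcoth)).congr_deriv ?_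
  have hs : sinh z ≠ 0 := sinh_ne_zero.2 hz
  simp only [Pi.sub_apply, Pi.mul_apply, id_eq]
  field_simp
  linear_combination (-sinh z) * cosh_sq_sub_sinh_sq z

/-- For `z > 0`, the derivative of `H(z) = z + (1 - z coth z) coth z` equals
`(2/sinh³ z)(z cosh z - sinh z)`, this is strictly positive, and consequently
`H` is strictly increasing on `(0,∞)`. -/
theorem H_deriv_and_strictMono :
    (∀ z : ℝ, 0 < z →
      HasDerivAt
        (fun z : ℝ => z + (1 - z * (Real.cosh z / Real.sinh z)) * (Real.cosh z / Real.sinh z))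
        (2 / (Real.sinh z)^3 * (z * Real.cosh z - Real.sinh z)) z ∧
      0 < 2 / (Real.sinh z)^3 * (z * Real.cosh z - Real.sinh z)) ∧
    StrictMonoOn
      (fun z : ℝ => z + (1 - z * (Real.cosh z / Real.sinh z)) * (Real.cosh z / Real.sinh z))
      (Set.Ioi (0 : ℝ)) := by
  have hderiv : ∀ z : ℝ, 0 < z →
      HasDerivAt (fun z => z + (1 - z * (cosh z / sinh z)) * (cosh z / sinh z))
        (2 / sinh z ^ 3 * (z * cosh z - sinh z)) z ∧
      0 < 2 / sinh z ^ 3 * (z * cosh z - sinh z) := fun z hz =>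
    ⟨hasDerivAt_add_one_sub_mul_coth_mul_coth hz.ne',
      mul_pos (div_pos two_pos (pow_pos (sinh_pos_iff.2 hz) 3))
        (sub_pos.2 (sinh_lt_mul_cosh hz))⟩
  refine ⟨hderiv, strictMonoOn_of_deriv_pos (convex_Ioi 0)
    (fun z hz => (hderiv z hz).1.continuousAt.continuousWithinAt) fun z hz => ?_⟩
  rw [interior_Ioi] at hz
  exact (hderiv z hz).1.deriv ▸ (hderiv z hz).2
end
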